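/- An endomorphism Φ of F_n × Z^m (n ≥ 2, m ≥ 1) of type I, with data (φ, Q, P), is injective if and only if φ is injective and det(Q) ≠ 0. -/

import Mathlib

open Matrix

/-- Abelianization of the free group `F_n` as a hom to `Multiplicative (Fin n → ℤ)`. -/
def abHom {n : ℕ} : FreeGroup (Fin n) →* Multiplicative (Fin n → ℤ) :=
  FreeGroup.lift (fun i => Multiplicative.ofAdd (Pi.single i 1))

/-- The exponent-sum vector `u^ab ∈ ℤ^n` of `u ∈ F_n`. -/
def abv {n : ℕ} (u : FreeGroup (Fin n)) : Fin n → ℤ := Multiplicative.toAdd (abHom u)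

/-- The FATF group `F_n × ℤ^m`. -/
abbrev FATF (n m : ℕ) := FreeGroup (Fin n) × Multiplicative (Fin m → ℤ)

/-- Type-I endomorphism formula: `u·t^a ↦ (uφ)·t^(aQ + u^ab·P)`. -/
def typeI {n m : ℕ} (φ : FreeGroup (Fin n) →* FreeGroup (Fin n))
    (Q : Matrix (Fin m) (Fin m) ℤ) (P : Matrix (Fin n) (Fin m) ℤ) :
    FATF n m → FATF n m :=
  fun g => (φ g.1,
    Multiplicative.ofAdd (Matrix.vecMul (Multiplicative.toAdd g.2) Q + Matrix.vecMul (abv g.1) P))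

/-- Type-II endomorphism formula:
`u·t^a ↦ w^(a·rᵀ + u^ab·sᵀ)·t^(aQ + u^ab·P)`. -/
def typeII {n m : ℕ} (w : FreeGroup (Fin n)) (r : Fin m → ℤ) (s : Fin n → ℤ)
    (Q : Matrix (Fin m) (Fin m) ℤ) (P : Matrix (Fin n) (Fin m) ℤ) :
    FATF n m → FATF n m :=
  fun g => (w ^ (dotProduct (Multiplicative.toAdd g.2) r + dotProduct (abv g.1) s),
    Multiplicative.ofAdd (Matrix.vecMul (Multiplicative.toAdd g.2) Q + Matrix.vecMul (abv g.1) P))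

lemma abv_one {n : ℕ} : abv (1 : FreeGroup (Fin n)) = 0 := by
  simp [abv]

lemma abv_zpow {n : ℕ} (w : FreeGroup (Fin n)) (t : ℤ) : abv (w ^ t) = t • abv w := by
  simp [abv, map_zpow]

/-- a type-I endomorphism `Φ_{φ,Q,P}` of `F_n × ℤ^m` is injective
iff `φ` is injective and `det Q ≠ 0`. -/
theorem typeI_injective_iff (n m : ℕ) (hn : 2 ≤ n) (hm : 1 ≤ m)
    (φ : FreeGroup (Fin n) →* FreeGroup (Fin n))
    (Q : Matrix (Fin m) (Fin m) ℤ) (P : Matrix (Fin n) (Fin m) ℤ) :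
    Function.Injective (typeI φ Q P) ↔ Function.Injective ⇑φ ∧ Q.det ≠ 0 := by
  constructor
  · intro h
    have hdet : Q.det ≠ 0 := by
      intro hdet
      obtain ⟨v, hv, hv0⟩ := Matrix.exists_vecMul_eq_zero_iff.mpr hdet
      have heq : typeI φ Q P (1, Multiplicative.ofAdd v) = typeI φ Q P (1, 1) := by
        simp [typeI, abv_one, hv0]
      have := h heq
      exact hv (by simpa using congrArg Prod.snd this)
    refine ⟨?_, hdet⟩
    rw [injective_iff_map_eq_one]
    intro w hw
    by_contra hw1
    by_cases hd : abv w = 0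
    · apply hw1
      have heq : typeI φ Q P (w, 1) = typeI φ Q P (1, 1) := by
        simp [typeI, hd, abv_one, hw]
      exact congrArg Prod.fst (h heq)
    · set t : ℤ := Q.det with ht
      set c : Fin m → ℤ := Matrix.vecMul (Matrix.vecMul (abv w) P) Q.adjugate with hc
      have hcQ : Matrix.vecMul c Q = t • Matrix.vecMul (abv w) P := by
        rw [hc, Matrix.vecMul_vecMul, Matrix.adjugate_mul]
        ext j
        simp [Matrix.vecMul, dotProduct, Matrix.smul_apply, Matrix.one_apply,
          mul_comm]
        exact Or.inl rfl
      have heq : typeI φ Q P (w ^ t, 1) = typeI φ Q P (1, Multiplicative.ofAdd c) := by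
        simp only [typeI, Prod.mk.injEq]
        constructor
        · simp [map_zpow, hw]
        · have hsm : Matrix.vecMul (t • abv w) P = t • Matrix.vecMul (abv w) P := by
            ext j
            simp [Matrix.vecMul, dotProduct, Finset.mul_sum, Pi.smul_apply,
              smul_eq_mul, mul_assoc]
          rw [abv_zpow, abv_one, hsm, toAdd_one, toAdd_ofAdd, hcQ,
            Matrix.zero_vecMul, Matrix.zero_vecMul, zero_add, add_zero]
      have hwt : w ^ t = 1 := congrArg Prod.fst (h heq)
      have : abv (w ^ t) = 0 := by rw [hwt, abv_one]
      rw [abv_zpow] at this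
      exact hd (smul_eq_zero.mp this |>.resolve_left hdet)
  · rintro ⟨hφ, hdet⟩ ⟨u, a⟩ ⟨v, b⟩ hE
    have huv : u = v := hφ (congrArg Prod.fst hE)
    subst huv
    have h2 := congrArg Prod.snd hE
    simp only [typeI] at h2
    have h3 : Matrix.vecMul (Multiplicative.toAdd a) Q = Matrix.vecMul (Multiplicative.toAdd b) Q := by
      have := congrArg Multiplicative.toAdd h2
      simpa using this
    have h4 : Matrix.vecMul (Multiplicative.toAdd a - Multiplicative.toAdd b) Q = 0 := by
      rw [Matrix.sub_vecMul, h3, sub_self]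
    have h5 : Multiplicative.toAdd a - Multiplicative.toAdd b = 0 := by
      by_contra hne
      exact hdet (Matrix.exists_vecMul_eq_zero_iff.mp ⟨_, hne, h4⟩)
    have h6 : Multiplicative.toAdd a = Multiplicative.toAdd b := sub_eq_zero.mp h5
    exact Prod.ext rfl (by simpa using congrArg Multiplicative.ofAdd h6)
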